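/- There is an absolute constant C > 0 such that for every M > 0, every a with 0 ≤ a ≤ M, every r ≥ 5M/2, every θ ∈ (0, π), and every (τ, ξ, Φ, Θ) ∈ ℝ⁴: |p_a(r,θ,τ,ξ,Φ,Θ) − p_0(r,θ,τ,ξ,Φ,Θ)| ≤ C(aM/r²)(τ² + ξ² + Θ²/r² + Φ²/(r² sin²θ)), where p_a is the principal symbol of the Kerr d'Alembertian with parameters (M, a) and p_0 is the Schwarzschild one (a = 0). -/

import Mathlib

open Real

/-- The principal symbol of the Kerr d'Alembertian with parameters `(M, a)`, in
Boyer–Lindquist coordinates. -/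
noncomputable def kerrSymbol (M a r θ τ ξ Φ Θ : ℝ) : ℝ :=
  let Δ : ℝ := r ^ 2 - 2 * M * r + a ^ 2
  let ρ2 : ℝ := r ^ 2 + a ^ 2 * Real.cos θ ^ 2
  (-(((r ^ 2 + a ^ 2) ^ 2 - a ^ 2 * Δ * Real.sin θ ^ 2) / (ρ2 * Δ))) * τ ^ 2
    + 2 * (-(2 * a * M * r / (ρ2 * Δ))) * τ * Φ
    + (Δ / ρ2) * ξ ^ 2
    + ((Δ - a ^ 2 * Real.sin θ ^ 2) / (ρ2 * Δ * Real.sin θ ^ 2)) * Φ ^ 2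
    + (1 / ρ2) * Θ ^ 2

private lemma abs_div_le' {n N d D : ℝ} (hn : |n| ≤ N) (hD : 0 < D) (hDd : D ≤ d) :
    |n / d| ≤ N / D := by
  rw [abs_div, abs_of_pos (lt_of_lt_of_le hD hDd)]
  exact div_le_div₀ (le_trans (abs_nonneg n) hn) hn hD hDd

set_option maxHeartbeats 2000000 in
/-- The core estimate, with all geometric quantities abstracted. -/
private lemma kerr_bound_aux (M a r s c D0 Da R τ ξ u v : ℝ)
    (hM : 0 < M) (ha0 : 0 ≤ a) (haM : a ≤ M) (hM25 : 5 * M ≤ 2 * r) (hr : 0 < r)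
    (hs0 : 0 < s) (hs1 : s ≤ 1) (hc1 : c ^ 2 ≤ 1)
    (hD0l : r ^ 2 / 5 ≤ D0) (hD0u : D0 ≤ r ^ 2)
    (hDal : r ^ 2 / 5 ≤ Da) (hDau : Da ≤ 2 * r ^ 2)
    (hRl : r ^ 2 ≤ R) (hRu : R ≤ 2 * r ^ 2) :
    |2 * M * r * (a ^ 2 * (r ^ 2 - s ^ 2 * D0 + a ^ 2 * c ^ 2)) / (R * (Da * D0)) * τ ^ 2
      + -(4 * a * M * r ^ 2 * s) / (R * Da) * (τ * u)
      + a ^ 2 * (r ^ 2 - c ^ 2 * D0) / (R * r ^ 2) * ξ ^ 2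
      + -(a ^ 2 * (s ^ 2 * r ^ 2 + c ^ 2 * Da)) / (R * Da) * u ^ 2
      + -(a ^ 2 * c ^ 2) / R * v ^ 2|
    ≤ 50 * (a * M / r ^ 2) * (τ ^ 2 + ξ ^ 2 + v ^ 2 + u ^ 2) := by
  have hr2 : (0:ℝ) < r ^ 2 := by positivity
  have ha2M : a ^ 2 ≤ a * M := by nlinarith
  have har : a ≤ 2 / 5 * r := by nlinarith
  have hc0 : (0:ℝ) ≤ c ^ 2 := sq_nonneg c
  have hs2 : (0:ℝ) ≤ s ^ 2 := sq_nonneg s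
  have hs21 : s ^ 2 ≤ 1 := by nlinarith
  have hD00 : 0 < D0 := lt_of_lt_of_le (by positivity) hD0l
  have hDa0 : 0 < Da := lt_of_lt_of_le (by positivity) hDal
  have hR0 : 0 < R := lt_of_lt_of_le (by positivity) hRl
  -- term 1
  have hX0 : 0 ≤ r ^ 2 - s ^ 2 * D0 + a ^ 2 * c ^ 2 := by nlinarith
  have hX2 : r ^ 2 - s ^ 2 * D0 + a ^ 2 * c ^ 2 ≤ 2 * r ^ 2 := by nlinarith
  have hn1 : |2 * M * r * (a ^ 2 * (r ^ 2 - s ^ 2 * D0 + a ^ 2 * c ^ 2))|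
      ≤ 8 / 5 * (a * M) * r ^ 4 := by
    rw [abs_of_nonneg (by positivity)]
    have s1 : a ^ 2 * (r ^ 2 - s ^ 2 * D0 + a ^ 2 * c ^ 2) ≤ a ^ 2 * (2 * r ^ 2) :=
      mul_le_mul_of_nonneg_left hX2 (sq_nonneg a)
    have s2 : 2 * M * r * (a ^ 2 * (r ^ 2 - s ^ 2 * D0 + a ^ 2 * c ^ 2))
        ≤ 2 * M * r * (a ^ 2 * (2 * r ^ 2)) :=
      mul_le_mul_of_nonneg_left s1 (by positivity)
    have s3 : a ^ 2 ≤ 2 / 5 * r * a := by nlinarith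
    have s4 : 4 * M * r ^ 3 * a ^ 2 ≤ 4 * M * r ^ 3 * (2 / 5 * r * a) :=
      mul_le_mul_of_nonneg_left s3 (by positivity)
    linarith [s2, s4]
  have hd1 : r ^ 2 * (r ^ 2 / 5 * (r ^ 2 / 5)) ≤ R * (Da * D0) := by
    have h1 : r ^ 2 / 5 * (r ^ 2 / 5) ≤ Da * D0 :=
      mul_le_mul hDal hD0l (by positivity) hDa0.le
    exact mul_le_mul hRl h1 (by positivity) hR0.le
  have hb1 : |2 * M * r * (a ^ 2 * (r ^ 2 - s ^ 2 * D0 + a ^ 2 * c ^ 2)) / (R * (Da * D0))|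
      ≤ 40 * (a * M) / r ^ 2 := by
    have h := abs_div_le' hn1 (show (0:ℝ) < r ^ 2 * (r ^ 2 / 5 * (r ^ 2 / 5)) by positivity) hd1
    calc |2 * M * r * (a ^ 2 * (r ^ 2 - s ^ 2 * D0 + a ^ 2 * c ^ 2)) / (R * (Da * D0))|
        ≤ 8 / 5 * (a * M) * r ^ 4 / (r ^ 2 * (r ^ 2 / 5 * (r ^ 2 / 5))) := h
      _ = 40 * (a * M) / r ^ 2 := by field_simp; ring
  -- term 2
  have hn2 : |(-(4 * a * M * r ^ 2 * s))| ≤ 4 * (a * M) * r ^ 2 := by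
    rw [abs_neg, abs_of_nonneg (by positivity)]
    have h1 : 4 * a * M * r ^ 2 * s ≤ 4 * a * M * r ^ 2 * 1 :=
      mul_le_mul_of_nonneg_left hs1 (by positivity)
    linarith
  have hd2 : r ^ 2 * (r ^ 2 / 5) ≤ R * Da :=
    mul_le_mul hRl hDal (by positivity) hR0.le
  have hb2 : |(-(4 * a * M * r ^ 2 * s)) / (R * Da)| ≤ 20 * (a * M) / r ^ 2 := by
    have h := abs_div_le' hn2 (show (0:ℝ) < r ^ 2 * (r ^ 2 / 5) by positivity) hd2
    calc |(-(4 * a * M * r ^ 2 * s)) / (R * Da)|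
        ≤ 4 * (a * M) * r ^ 2 / (r ^ 2 * (r ^ 2 / 5)) := h
      _ = 20 * (a * M) / r ^ 2 := by field_simp; ring
  -- term 3
  have hn3 : |a ^ 2 * (r ^ 2 - c ^ 2 * D0)| ≤ a * M * r ^ 2 := by
    have hY0 : 0 ≤ r ^ 2 - c ^ 2 * D0 := by nlinarith
    rw [abs_of_nonneg (by positivity)]
    have s1 : a ^ 2 * (r ^ 2 - c ^ 2 * D0) ≤ a ^ 2 * r ^ 2 := by
      have : r ^ 2 - c ^ 2 * D0 ≤ r ^ 2 := by nlinarith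
      exact mul_le_mul_of_nonneg_left this (sq_nonneg a)
    have s2 : a ^ 2 * r ^ 2 ≤ a * M * r ^ 2 := mul_le_mul_of_nonneg_right ha2M hr2.le
    linarith
  have hd3 : r ^ 2 * r ^ 2 ≤ R * r ^ 2 := mul_le_mul_of_nonneg_right hRl hr2.le
  have hb3 : |a ^ 2 * (r ^ 2 - c ^ 2 * D0) / (R * r ^ 2)| ≤ a * M / r ^ 2 := by
    have h := abs_div_le' hn3 (show (0:ℝ) < r ^ 2 * r ^ 2 by positivity) hd3
    calc |a ^ 2 * (r ^ 2 - c ^ 2 * D0) / (R * r ^ 2)|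
        ≤ a * M * r ^ 2 / (r ^ 2 * r ^ 2) := h
      _ = a * M / r ^ 2 := by field_simp
  -- term 4
  have hn4 : |(-(a ^ 2 * (s ^ 2 * r ^ 2 + c ^ 2 * Da)))| ≤ 3 * (a * M) * r ^ 2 := by
    rw [abs_neg, abs_of_nonneg (by positivity)]
    have h1 : s ^ 2 * r ^ 2 + c ^ 2 * Da ≤ 3 * r ^ 2 := by nlinarith
    have s1 : a ^ 2 * (s ^ 2 * r ^ 2 + c ^ 2 * Da) ≤ a ^ 2 * (3 * r ^ 2) :=
      mul_le_mul_of_nonneg_left h1 (sq_nonneg a)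
    have s2 : a ^ 2 * (3 * r ^ 2) ≤ a * M * (3 * r ^ 2) :=
      mul_le_mul_of_nonneg_right ha2M (by positivity)
    linarith
  have hb4 : |(-(a ^ 2 * (s ^ 2 * r ^ 2 + c ^ 2 * Da))) / (R * Da)| ≤ 15 * (a * M) / r ^ 2 := by
    have h := abs_div_le' hn4 (show (0:ℝ) < r ^ 2 * (r ^ 2 / 5) by positivity) hd2
    calc |(-(a ^ 2 * (s ^ 2 * r ^ 2 + c ^ 2 * Da))) / (R * Da)|
        ≤ 3 * (a * M) * r ^ 2 / (r ^ 2 * (r ^ 2 / 5)) := h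
      _ = 15 * (a * M) / r ^ 2 := by field_simp; ring
  -- term 5
  have hn5 : |(-(a ^ 2 * c ^ 2))| ≤ a * M := by
    rw [abs_neg, abs_of_nonneg (by positivity)]
    have s1 : a ^ 2 * c ^ 2 ≤ a ^ 2 * 1 := mul_le_mul_of_nonneg_left hc1 (sq_nonneg a)
    linarith
  have hb5 : |(-(a ^ 2 * c ^ 2)) / R| ≤ a * M / r ^ 2 := abs_div_le' hn5 hr2 hRl
  -- cross term
  have hcross : |τ * u| ≤ (τ ^ 2 + u ^ 2) / 2 := by
    rw [abs_mul]
    nlinarith [sq_nonneg (|τ| - |u|), sq_abs τ, sq_abs u, abs_nonneg τ, abs_nonneg u]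
  -- assemble
  have t1 : |2 * M * r * (a ^ 2 * (r ^ 2 - s ^ 2 * D0 + a ^ 2 * c ^ 2)) / (R * (Da * D0)) * τ ^ 2|
      ≤ 40 * (a * M) / r ^ 2 * τ ^ 2 := by
    rw [abs_mul, abs_of_nonneg (sq_nonneg τ)]
    exact mul_le_mul_of_nonneg_right hb1 (sq_nonneg τ)
  have t2 : |(-(4 * a * M * r ^ 2 * s)) / (R * Da) * (τ * u)|
      ≤ 20 * (a * M) / r ^ 2 * ((τ ^ 2 + u ^ 2) / 2) := by
    rw [abs_mul]
    exact mul_le_mul hb2 hcross (abs_nonneg _) (by positivity)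
  have t3 : |a ^ 2 * (r ^ 2 - c ^ 2 * D0) / (R * r ^ 2) * ξ ^ 2|
      ≤ a * M / r ^ 2 * ξ ^ 2 := by
    rw [abs_mul, abs_of_nonneg (sq_nonneg ξ)]
    exact mul_le_mul_of_nonneg_right hb3 (sq_nonneg ξ)
  have t4 : |(-(a ^ 2 * (s ^ 2 * r ^ 2 + c ^ 2 * Da))) / (R * Da) * u ^ 2|
      ≤ 15 * (a * M) / r ^ 2 * u ^ 2 := by
    rw [abs_mul, abs_of_nonneg (sq_nonneg u)]
    exact mul_le_mul_of_nonneg_right hb4 (sq_nonneg u)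
  have t5 : |(-(a ^ 2 * c ^ 2)) / R * v ^ 2| ≤ a * M / r ^ 2 * v ^ 2 := by
    rw [abs_mul, abs_of_nonneg (sq_nonneg v)]
    exact mul_le_mul_of_nonneg_right hb5 (sq_nonneg v)
  have tri : |2 * M * r * (a ^ 2 * (r ^ 2 - s ^ 2 * D0 + a ^ 2 * c ^ 2)) / (R * (Da * D0)) * τ ^ 2
      + -(4 * a * M * r ^ 2 * s) / (R * Da) * (τ * u)
      + a ^ 2 * (r ^ 2 - c ^ 2 * D0) / (R * r ^ 2) * ξ ^ 2
      + -(a ^ 2 * (s ^ 2 * r ^ 2 + c ^ 2 * Da)) / (R * Da) * u ^ 2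
      + -(a ^ 2 * c ^ 2) / R * v ^ 2|
      ≤ |2 * M * r * (a ^ 2 * (r ^ 2 - s ^ 2 * D0 + a ^ 2 * c ^ 2)) / (R * (Da * D0)) * τ ^ 2|
      + |(-(4 * a * M * r ^ 2 * s)) / (R * Da) * (τ * u)|
      + |a ^ 2 * (r ^ 2 - c ^ 2 * D0) / (R * r ^ 2) * ξ ^ 2|
      + |(-(a ^ 2 * (s ^ 2 * r ^ 2 + c ^ 2 * Da))) / (R * Da) * u ^ 2|
      + |(-(a ^ 2 * c ^ 2)) / R * v ^ 2| := by
    refine le_trans (abs_add_le _ _) (add_le_add_left ?_ _)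
    refine le_trans (abs_add_le _ _) (add_le_add_left ?_ _)
    refine le_trans (abs_add_le _ _) (add_le_add_left ?_ _)
    exact abs_add_le _ _
  have hAM : (0:ℝ) ≤ a * M / r ^ 2 := by positivity
  have h1 : 0 ≤ a * M / r ^ 2 * ξ ^ 2 := by positivity
  have h2 : 0 ≤ a * M / r ^ 2 * v ^ 2 := by positivity
  have h3 : 0 ≤ a * M / r ^ 2 * u ^ 2 := by positivity
  have h4 : 0 ≤ a * M / r ^ 2 * τ ^ 2 := by positivity
  calc _ ≤ _ := tri
    _ ≤ 40 * (a * M) / r ^ 2 * τ ^ 2 + 20 * (a * M) / r ^ 2 * ((τ ^ 2 + u ^ 2) / 2)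
        + a * M / r ^ 2 * ξ ^ 2 + 15 * (a * M) / r ^ 2 * u ^ 2
        + a * M / r ^ 2 * v ^ 2 := by
      exact add_le_add (add_le_add (add_le_add (add_le_add t1 t2) t3) t4) t5
    _ = a * M / r ^ 2 * (50 * τ ^ 2 + ξ ^ 2 + 25 * u ^ 2 + v ^ 2) := by ring
    _ ≤ a * M / r ^ 2 * (50 * (τ ^ 2 + ξ ^ 2 + v ^ 2 + u ^ 2)) := by
      refine mul_le_mul_of_nonneg_left ?_ hAM
      linarith [sq_nonneg ξ, sq_nonneg u, sq_nonneg v]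
    _ = 50 * (a * M / r ^ 2) * (τ ^ 2 + ξ ^ 2 + v ^ 2 + u ^ 2) := by ring

set_option maxHeartbeats 4000000 in
/-- **The Kerr symbol is an `O(a/r²)` perturbation of the Schwarzschild symbol
away from the event horizon.** There is an absolute constant `C > 0` such that for
every `M > 0`, `0 ≤ a ≤ M`, `r ≥ 5M/2`, `θ ∈ (0, π)` and all `(τ,ξ,Φ,Θ) ∈ ℝ⁴`:
`|p_a − p_0| ≤ C(aM/r²)(τ² + ξ² + Θ²/r² + Φ²/(r² sin²θ))`. -/
theorem kerr_schwarzschild_symbol_comparison :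
    ∃ C : ℝ, 0 < C ∧
      ∀ M a r θ τ ξ Φ Θ : ℝ, 0 < M → 0 ≤ a → a ≤ M → 5 * M / 2 ≤ r →
        0 < θ → θ < π →
        |kerrSymbol M a r θ τ ξ Φ Θ - kerrSymbol M 0 r θ τ ξ Φ Θ|
          ≤ C * (a * M / r ^ 2) *
            (τ ^ 2 + ξ ^ 2 + Θ ^ 2 / r ^ 2 + Φ ^ 2 / (r ^ 2 * Real.sin θ ^ 2)) := by
  refine ⟨50, by norm_num, ?_⟩
  intro M a r θ τ ξ Φ Θ hM ha0 haM hr5 hθ0 hθπ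
  have hr : 0 < r := lt_of_lt_of_le (by linarith) hr5
  have hs0 : 0 < Real.sin θ := Real.sin_pos_of_pos_of_lt_pi hθ0 hθπ
  have hs1 : Real.sin θ ≤ 1 := Real.sin_le_one θ
  have hsc : Real.sin θ ^ 2 + Real.cos θ ^ 2 = 1 := Real.sin_sq_add_cos_sq θ
  have hc1 : Real.cos θ ^ 2 ≤ 1 := by nlinarith [sq_nonneg (Real.sin θ)]
  have hM25 : 5 * M ≤ 2 * r := by linarith
  have hD0l : r ^ 2 / 5 ≤ r ^ 2 - 2 * M * r := by nlinarith
  have hD0u : r ^ 2 - 2 * M * r ≤ r ^ 2 := by nlinarith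
  have hD00 : 0 < r ^ 2 - 2 * M * r := lt_of_lt_of_le (by positivity) hD0l
  have ha2 : a ^ 2 ≤ 4 / 25 * r ^ 2 := by nlinarith
  have hDal : r ^ 2 / 5 ≤ r ^ 2 - 2 * M * r + a ^ 2 := by nlinarith
  have hDau : r ^ 2 - 2 * M * r + a ^ 2 ≤ 2 * r ^ 2 := by nlinarith
  have hDa0 : 0 < r ^ 2 - 2 * M * r + a ^ 2 := by nlinarith
  have hRl : r ^ 2 ≤ r ^ 2 + a ^ 2 * Real.cos θ ^ 2 := by nlinarith [sq_nonneg (a * Real.cos θ)]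
  have hRu : r ^ 2 + a ^ 2 * Real.cos θ ^ 2 ≤ 2 * r ^ 2 := by nlinarith
  have hR0 : 0 < r ^ 2 + a ^ 2 * Real.cos θ ^ 2 := lt_of_lt_of_le (by positivity) hRl
  have hs2 : Real.sin θ ^ 2 ≠ 0 := by positivity
  have hcc : Real.cos θ ^ 2 = 1 - Real.sin θ ^ 2 := by linarith
  have e1 : -(((r ^ 2 + a ^ 2) ^ 2 - a ^ 2 * (r ^ 2 - 2 * M * r + a ^ 2) * Real.sin θ ^ 2)
        / ((r ^ 2 + a ^ 2 * Real.cos θ ^ 2) * (r ^ 2 - 2 * M * r + a ^ 2)))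
      - -(((r ^ 2 + 0 ^ 2) ^ 2 - 0 ^ 2 * (r ^ 2 - 2 * M * r + 0 ^ 2) * Real.sin θ ^ 2)
        / ((r ^ 2 + 0 ^ 2 * Real.cos θ ^ 2) * (r ^ 2 - 2 * M * r + 0 ^ 2)))
      = 2 * M * r * (a ^ 2 * (r ^ 2 - Real.sin θ ^ 2 * (r ^ 2 - 2 * M * r)
            + a ^ 2 * Real.cos θ ^ 2))
          / ((r ^ 2 + a ^ 2 * Real.cos θ ^ 2)
            * ((r ^ 2 - 2 * M * r + a ^ 2) * (r ^ 2 - 2 * M * r))) := by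
    rw [hcc]
    field_simp [hDa0.ne', hD00.ne', hr.ne', hs0.ne', show r - 2 * M ≠ 0 by nlinarith,
      show r * (r - 2 * M) + a ^ 2 ≠ 0 by nlinarith,
      show r ^ 2 + a ^ 2 * (1 - Real.sin θ ^ 2) ≠ 0 from by rw [← hcc]; exact hR0.ne']
    ring
  have e2 : 2 * (-(2 * a * M * r
          / ((r ^ 2 + a ^ 2 * Real.cos θ ^ 2) * (r ^ 2 - 2 * M * r + a ^ 2))))
      - 2 * (-(2 * 0 * M * r
          / ((r ^ 2 + 0 ^ 2 * Real.cos θ ^ 2) * (r ^ 2 - 2 * M * r + 0 ^ 2))))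
      = -(4 * a * M * r ^ 2 * Real.sin θ)
          / ((r ^ 2 + a ^ 2 * Real.cos θ ^ 2) * (r ^ 2 - 2 * M * r + a ^ 2))
          * (1 / (r * Real.sin θ)) := by
    rw [hcc]
    field_simp [hDa0.ne', hD00.ne', hr.ne', hs0.ne',
      show r ^ 2 + a ^ 2 * (1 - Real.sin θ ^ 2) ≠ 0 from by rw [← hcc]; exact hR0.ne']
    ring
  have e3 : (r ^ 2 - 2 * M * r + a ^ 2) / (r ^ 2 + a ^ 2 * Real.cos θ ^ 2)
      - (r ^ 2 - 2 * M * r + 0 ^ 2) / (r ^ 2 + 0 ^ 2 * Real.cos θ ^ 2)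
      = a ^ 2 * (r ^ 2 - Real.cos θ ^ 2 * (r ^ 2 - 2 * M * r))
          / ((r ^ 2 + a ^ 2 * Real.cos θ ^ 2) * r ^ 2) := by
    rw [hcc]
    field_simp [hr.ne',
      show r ^ 2 + a ^ 2 * (1 - Real.sin θ ^ 2) ≠ 0 from by rw [← hcc]; exact hR0.ne']
    ring
  have e4 : ((r ^ 2 - 2 * M * r + a ^ 2) - a ^ 2 * Real.sin θ ^ 2)
        / ((r ^ 2 + a ^ 2 * Real.cos θ ^ 2) * (r ^ 2 - 2 * M * r + a ^ 2) * Real.sin θ ^ 2)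
      - ((r ^ 2 - 2 * M * r + 0 ^ 2) - 0 ^ 2 * Real.sin θ ^ 2)
        / ((r ^ 2 + 0 ^ 2 * Real.cos θ ^ 2) * (r ^ 2 - 2 * M * r + 0 ^ 2) * Real.sin θ ^ 2)
      = -(a ^ 2 * (Real.sin θ ^ 2 * r ^ 2 + Real.cos θ ^ 2 * (r ^ 2 - 2 * M * r + a ^ 2)))
          / ((r ^ 2 + a ^ 2 * Real.cos θ ^ 2) * (r ^ 2 - 2 * M * r + a ^ 2))
          * (1 / (r * Real.sin θ)) ^ 2 := by
    rw [hcc]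
    field_simp [hDa0.ne', hD00.ne', hr.ne', hs0.ne', show r - 2 * M ≠ 0 by nlinarith,
      show r * (r - 2 * M) + a ^ 2 ≠ 0 by nlinarith,
      show r ^ 2 + a ^ 2 * (1 - Real.sin θ ^ 2) ≠ 0 from by rw [← hcc]; exact hR0.ne']
    ring
  have e5 : 1 / (r ^ 2 + a ^ 2 * Real.cos θ ^ 2) - 1 / (r ^ 2 + 0 ^ 2 * Real.cos θ ^ 2)
      = -(a ^ 2 * Real.cos θ ^ 2) / (r ^ 2 + a ^ 2 * Real.cos θ ^ 2) * (1 / r) ^ 2 := by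
    rw [hcc]
    field_simp [hr.ne',
      show r ^ 2 + a ^ 2 * (1 - Real.sin θ ^ 2) ≠ 0 from by rw [← hcc]; exact hR0.ne']
    ring
  have key : kerrSymbol M a r θ τ ξ Φ Θ - kerrSymbol M 0 r θ τ ξ Φ Θ
      = 2 * M * r * (a ^ 2 * (r ^ 2 - Real.sin θ ^ 2 * (r ^ 2 - 2 * M * r)
            + a ^ 2 * Real.cos θ ^ 2))
          / ((r ^ 2 + a ^ 2 * Real.cos θ ^ 2)
            * ((r ^ 2 - 2 * M * r + a ^ 2) * (r ^ 2 - 2 * M * r))) * τ ^ 2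
        + -(4 * a * M * r ^ 2 * Real.sin θ)
            / ((r ^ 2 + a ^ 2 * Real.cos θ ^ 2) * (r ^ 2 - 2 * M * r + a ^ 2))
            * (τ * (Φ / (r * Real.sin θ)))
        + a ^ 2 * (r ^ 2 - Real.cos θ ^ 2 * (r ^ 2 - 2 * M * r))
            / ((r ^ 2 + a ^ 2 * Real.cos θ ^ 2) * r ^ 2) * ξ ^ 2
        + -(a ^ 2 * (Real.sin θ ^ 2 * r ^ 2 + Real.cos θ ^ 2 * (r ^ 2 - 2 * M * r + a ^ 2)))
            / ((r ^ 2 + a ^ 2 * Real.cos θ ^ 2) * (r ^ 2 - 2 * M * r + a ^ 2))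
            * (Φ / (r * Real.sin θ)) ^ 2
        + -(a ^ 2 * Real.cos θ ^ 2) / (r ^ 2 + a ^ 2 * Real.cos θ ^ 2) * (Θ / r) ^ 2 := by
    simp only [kerrSymbol]
    linear_combination τ ^ 2 * e1 + (τ * Φ) * e2 + ξ ^ 2 * e3 + Φ ^ 2 * e4 + Θ ^ 2 * e5
  rw [key]
  have hw1 : Θ ^ 2 / r ^ 2 = (Θ / r) ^ 2 := by rw [div_pow]
  have hw2 : Φ ^ 2 / (r ^ 2 * Real.sin θ ^ 2) = (Φ / (r * Real.sin θ)) ^ 2 := by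
    rw [div_pow, mul_pow]
  rw [hw1, hw2]
  exact kerr_bound_aux M a r (Real.sin θ) (Real.cos θ) (r ^ 2 - 2 * M * r)
    (r ^ 2 - 2 * M * r + a ^ 2) (r ^ 2 + a ^ 2 * Real.cos θ ^ 2) τ ξ
    (Φ / (r * Real.sin θ)) (Θ / r)
    hM ha0 haM hM25 hr hs0 hs1 hc1 hD0l hD0u hDal hDau hRl hRu
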